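/- Let k ≥ 3, let G be a (k−2)-connected k-colorable chordal graph, let T be a clique of G with |T| ≥ k−1, let v ∈ T, and let α and β be k-colorings of G. If C^c_k(G,T) is a forest in which the α-node and the β-node lie in the same connected component, so that there is a unique α-β-path P, then C^c_k(G, T∖{v}) is a forest with a unique α-β-path P', and w(P') ≤ w(P). -/

import Mathlib

open SimpleGraph

/-- A proper `k`-coloring of a graph. -/
def IsColoring {W : Type*} (G : SimpleGraph W) (k : ℕ) (α : W → Fin k) : Prop :=
  ∀ u v : W, G.Adj u v → α u ≠ α v

/-- The `k`-color graph `C_k(G)`: nodes are proper `k`-colorings of `G`,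
two colorings being adjacent iff they differ on exactly one vertex. -/
def colorGraph {W : Type*} (G : SimpleGraph W) (k : ℕ) :
    SimpleGraph {α : W → Fin k // IsColoring G k α} where
  Adj α β := ∃! w, α.1 w ≠ β.1 w
  symm := by
    constructor
    rintro α β ⟨w, hw, hu⟩
    exact ⟨w, hw.symm, fun u hu' => hu u hu'.symm⟩
  loopless := by
    constructor
    rintro α ⟨w, hw, -⟩
    exact hw rfl

/-- The subgraph of a labeled graph consisting of the edges between
equally labeled nodes. -/
def sameLabelSub {N L : Type*} (H : SimpleGraph N) (f : N → L) : SimpleGraph N where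
  Adj x y := H.Adj x y ∧ f x = f y
  symm := ⟨fun _ _ h => ⟨h.1.symm, h.2.symm⟩⟩
  loopless := ⟨fun x h => H.irrefl h.1⟩

/-- The quotient graph obtained from a labeled graph by contracting every
(maximal) connected set of equally labeled nodes (i.e. every label component)
into a single node. -/
def quotGraph {N L : Type*} (H : SimpleGraph N) (f : N → L) :
    SimpleGraph (sameLabelSub H f).ConnectedComponent where
  Adj c d := c ≠ d ∧ ∃ a b, (sameLabelSub H f).connectedComponentMk a = c ∧
      (sameLabelSub H f).connectedComponentMk b = d ∧ H.Adj a b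
  symm := by
    constructor
    rintro c d ⟨hne, a, b, ha, hb, hab⟩
    exact ⟨hne.symm, b, a, hb, ha, hab.symm⟩
  loopless := ⟨fun c h => h.1 rfl⟩

/-- The common label of a label component. -/
def quotLabel {N L : Type*} (H : SimpleGraph N) (f : N → L) :
    (sameLabelSub H f).ConnectedComponent → L :=
  SimpleGraph.ConnectedComponent.lift f (by
    intro v w p hp
    clear hp
    induction p with
    | nil => rfl
    | cons h _ ih => exact (show H.Adj _ _ ∧ f _ = f _ from h).2.trans ih)

/-- The label of a coloring: its restriction to the terminal set `T`. -/
def csgLabelFun {W : Type*} (G : SimpleGraph W) (k : ℕ) (T : Set W) :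
    {α : W → Fin k // IsColoring G k α} → (T → Fin k) :=
  fun α t => α.1 t.1

/-- The node set of the contracted solution graph: the label components. -/
abbrev CSGNode {W : Type*} (G : SimpleGraph W) (k : ℕ) (T : Set W) :=
  (sameLabelSub (colorGraph G k) (csgLabelFun G k T)).ConnectedComponent

/-- The contracted solution graph `C^c_k(G,T)`. -/
def CSG {W : Type*} (G : SimpleGraph W) (k : ℕ) (T : Set W) : SimpleGraph (CSGNode G k T) :=
  quotGraph (colorGraph G k) (csgLabelFun G k T)

/-- The `γ`-node of the contracted solution graph: the label component containing `γ`. -/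
def csgNode {W : Type*} (G : SimpleGraph W) (k : ℕ) (T : Set W)
    (γ : {α : W → Fin k // IsColoring G k α}) : CSGNode G k T :=
  (sameLabelSub (colorGraph G k) (csgLabelFun G k T)).connectedComponentMk γ

/-- The label of a node of the contracted solution graph: the common restriction
to `T` of its colorings. -/
def csgLabel {W : Type*} (G : SimpleGraph W) (k : ℕ) (T : Set W) :
    CSGNode G k T → (T → Fin k) :=
  quotLabel (colorGraph G k) (csgLabelFun G k T)

/-- The restriction of a proper coloring to an induced subgraph. -/
def restrictColoring {W : Type*} (G : SimpleGraph W) (k : ℕ) (S : Set W)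
    (γ : {α : W → Fin k // IsColoring G k α}) :
    {α : S → Fin k // IsColoring (G.induce S) k α} :=
  ⟨fun u => γ.1 u.1, fun u w h => γ.2 u.1 w.1 h⟩

/-- A graph is chordal if it contains no induced cycle of length greater than 3. -/
def Chordal {W : Type*} (G : SimpleGraph W) : Prop :=
  ∀ n : ℕ, 4 ≤ n → IsEmpty (SimpleGraph.cycleGraph n ↪g G)

/-- `S` is a vertex cut: `G - S` is disconnected. -/
def IsVertexCut {W : Type*} (G : SimpleGraph W) (S : Set W) : Prop :=
  ¬ (G.induce Sᶜ).Preconnected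

/-- `G` is `l`-connected. -/
def LConnected {W : Type*} (G : SimpleGraph W) (l : ℕ) : Prop :=
  G.Connected ∧ l + 1 ≤ Nat.card W ∧ ∀ S : Set W, IsVertexCut G S → l ≤ S.ncard

/-- A labeled graph `(H,ℓ)`, whose labels are `k`-colorings of the complete graph
on a vertex (type) `S`, is an `(|S|,k)`-color-complete graph. -/
def IsColorComplete {N S : Type*} (k : ℕ) (H : SimpleGraph N) (ℓ : N → S → Fin k) : Prop :=
  (∀ x, Function.Injective (ℓ x)) ∧
  (∀ f : S → Fin k, Function.Injective f → ∃! x, ℓ x = f) ∧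
  (∀ x y, H.Adj x y ↔ ∃! s, ℓ x s ≠ ℓ y s)

/-- The injective neighborhood property. -/
def INP {N L : Type*} (H : SimpleGraph N) (ℓ : N → L) : Prop :=
  ∀ u v w : N, H.Adj u v → H.Adj u w → v ≠ w → ℓ v ≠ ℓ w

/-- The weight `w(P)` of a walk `P` in a labeled graph: the sum over the vertices `x`
of `P` of the number of colors used by labels of neighbors of `x` in `P` but not by
the label of `x`. -/
noncomputable def walkWeight {N S : Type*} {k : ℕ} {G : SimpleGraph N} (ℓ : N → S → Fin k)
    {a b : N} (P : G.Walk a b) : ℕ :=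
  letI := Classical.decEq N
  ∑ x ∈ P.support.toFinset,
    ((⋃ y ∈ P.toSubgraph.neighborSet x, Set.range (ℓ y)) \ Set.range (ℓ x)).ncard


/-! Forgetting `v` only coarsens the labelling of `C_k(G)`, so `C^c_k(G, T∖{v})` arises from
`C^c_k(G, T)` by contracting the fibres of the projection between label components, and these
fibres are connected. Contracting connected sets keeps a forest a forest: an edge of the coarse
graph lifts to an edge of the fine one, which is a bridge, so every walk around it must use it.
Projecting `P` and shortcutting gives `P'`. An edge of `P` that survives the projection recolours
a vertex other than `v`, so `v` keeps its colour; as `T` is a clique, a colour that is new at a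
projected node was already new at the original node, and summing over fibres gives
`w(P') ≤ w(P)`. -/

section Walks

variable {α β : Type*} {G : SimpleGraph α} {H : SimpleGraph β}

theorem exists_walk_edges_subset_map (φ : α → β)
    (hφ : ∀ x y, G.Adj x y → φ x ≠ φ y → H.Adj (φ x) (φ y)) {x y : α} (W : G.Walk x y) :
    ∃ Q : H.Walk (φ x) (φ y), Q.edges ⊆ W.edges.map (Sym2.map φ) := by
  induction W with
  | nil => exact ⟨.nil, by simp⟩
  | @cons x z y h W ih =>
    obtain ⟨Q, hQ⟩ := ih
    rw [Walk.edges_cons, List.map_cons]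
    by_cases hxz : φ x = φ z
    · refine ⟨Q.copy hxz.symm rfl, ?_⟩
      rw [Walk.edges_copy]
      exact List.Subset.trans hQ (List.subset_cons_self _ _)
    · refine ⟨.cons (hφ x z h hxz) Q, ?_⟩
      rw [Walk.edges_cons, Sym2.map_mk]
      exact List.cons_subset_cons _ hQ

theorem exists_mem_edges_of_mk_mem_map (φ : α → β) {x y : α} (W : G.Walk x y) {x' y' : β}
    (h : s(x', y') ∈ W.edges.map (Sym2.map φ)) :
    ∃ A B, s(A, B) ∈ W.edges ∧ φ A = x' ∧ φ B = y' := by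
  obtain ⟨e, he, hex⟩ := List.mem_map.mp h
  induction e using Sym2.ind with
  | _ A B =>
    rcases Sym2.eq_iff.mp ((Sym2.map_mk φ A B).symm.trans hex) with ⟨hA, hB⟩ | ⟨hB, hA⟩
    · exact ⟨A, B, he, hA, hB⟩
    · exact ⟨B, A, Sym2.eq_swap ▸ he, hA, hB⟩

end Walks

theorem walkWeight_le_of_edges_subset_map {N N' S S' : Type*} {k : ℕ} {H : SimpleGraph N}
    {H' : SimpleGraph N'} (ℓ : N → S → Fin k) (ℓ' : N' → S' → Fin k) (φ : N → N')
    (hnew : ∀ A B, H.Adj A B → φ A ≠ φ B →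
      Set.range (ℓ' (φ B)) \ Set.range (ℓ' (φ A)) ⊆ Set.range (ℓ B) \ Set.range (ℓ A))
    {X Y : N} {x y : N'} (P : H.Walk X Y) (Q : H'.Walk x y)
    (hQP : Q.edges ⊆ P.edges.map (Sym2.map φ)) :
    walkWeight ℓ' Q ≤ walkWeight ℓ P := by
  classical
  unfold walkWeight
  set newP := fun A =>
    ((⋃ B ∈ P.toSubgraph.neighborSet A, Set.range (ℓ B)) \ Set.range (ℓ A)).ncard
  have hfibre : ∀ x' ∈ Q.support.toFinset,
      ((⋃ y' ∈ Q.toSubgraph.neighborSet x', Set.range (ℓ' y')) \ Set.range (ℓ' x')).ncard ≤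
        ∑ A ∈ P.support.toFinset with φ A = x', newP A := by
    intro x' _
    refine (Set.ncard_le_ncard ?_ (Set.toFinite _)).trans (Finset.set_ncard_biUnion_le _ _)
    rintro c ⟨hc, hcx⟩
    obtain ⟨y', hy', hcy⟩ := Set.mem_iUnion₂.mp hc
    have hedge : s(x', y') ∈ Q.edges := Q.mem_edges_toSubgraph.mp hy'
    obtain ⟨A, B, hAB, rfl, rfl⟩ := exists_mem_edges_of_mk_mem_map φ P (hQP hedge)
    obtain ⟨hcB, hcA⟩ :=
      hnew A B (P.adj_of_mem_edges hAB) (Q.adj_of_mem_edges hedge).ne ⟨hcy, hcx⟩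
    have hA : A ∈ P.support.toFinset.filter (φ · = φ A) :=
      Finset.mem_filter.mpr ⟨List.mem_toFinset.mpr (P.fst_mem_support_of_mem_edges hAB), rfl⟩
    have hB : B ∈ P.toSubgraph.neighborSet A := P.mem_edges_toSubgraph.mpr hAB
    exact Set.mem_biUnion hA ⟨Set.mem_biUnion hB hcB, hcA⟩
  calc _ ≤ ∑ x' ∈ Q.support.toFinset, ∑ A ∈ P.support.toFinset with φ A = x', newP A :=
        Finset.sum_le_sum hfibre
    _ = ∑ A ∈ P.support.toFinset with φ A ∈ Q.support.toFinset, newP A :=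
        Finset.sum_fiberwise_eq_sum_filter _ _ _ _
    _ ≤ _ := Finset.sum_le_sum_of_subset (Finset.filter_subset _ _)

section Refinement

variable {N L₁ L₂ : Type*} {Γ : SimpleGraph N} {f : N → L₁} {g : N → L₂}

def Refines (f : N → L₁) (g : N → L₂) : Prop :=
  ∀ a b, f a = f b → g a = g b

def quotProj (hfg : Refines f g) :
    (sameLabelSub Γ f).ConnectedComponent → (sameLabelSub Γ g).ConnectedComponent :=
  ConnectedComponent.map
    { toFun := id, map_rel' := fun h => ⟨h.1, hfg _ _ h.2⟩ : sameLabelSub Γ f →g sameLabelSub Γ g }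

theorem quotGraph_adj_quotProj (hfg : Refines f g) (X Y : (sameLabelSub Γ f).ConnectedComponent)
    (hXY : (quotGraph Γ f).Adj X Y) (hne : quotProj hfg X ≠ quotProj hfg Y) :
    (quotGraph Γ g).Adj (quotProj hfg X) (quotProj hfg Y) := by
  obtain ⟨-, a, b, rfl, rfl, hab⟩ := hXY
  exact ⟨hne, a, b, rfl, rfl, hab⟩

theorem quotGraph_adj_mk_of_ne (hfg : Refines f g) {a b : N} (hab : Γ.Adj a b)
    (hne : (sameLabelSub Γ g).connectedComponentMk a ≠ (sameLabelSub Γ g).connectedComponentMk b) :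
    (quotGraph Γ f).Adj ((sameLabelSub Γ f).connectedComponentMk a)
      ((sameLabelSub Γ f).connectedComponentMk b) :=
  ⟨fun h => hne (congrArg (quotProj hfg) h), a, b, rfl, rfl, hab⟩

theorem exists_walk_collapsed_of_walk (hfg : Refines f g) {a b : N}
    (w : (sameLabelSub Γ g).Walk a b) :
    ∃ W : (quotGraph Γ f).Walk ((sameLabelSub Γ f).connectedComponentMk a)
      ((sameLabelSub Γ f).connectedComponentMk b),
      ∀ e ∈ W.edges, (e.map (quotProj hfg)).IsDiag := by
  induction w with
  | nil => exact ⟨.nil, by simp⟩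
  | @cons a c b h w ih =>
    obtain ⟨W, hW⟩ := ih
    by_cases hac : (sameLabelSub Γ f).connectedComponentMk a =
        (sameLabelSub Γ f).connectedComponentMk c
    · refine ⟨W.copy hac.symm rfl, ?_⟩
      rwa [Walk.edges_copy]
    · have hadj : (quotGraph Γ f).Adj ((sameLabelSub Γ f).connectedComponentMk a)
          ((sameLabelSub Γ f).connectedComponentMk c) := ⟨hac, a, c, rfl, rfl, h.1⟩
      refine ⟨.cons hadj W, ?_⟩
      rw [Walk.edges_cons, List.forall_mem_cons, Sym2.map_mk, Sym2.mk_isDiag_iff]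
      exact ⟨ConnectedComponent.sound h.reachable, hW⟩

theorem exists_walk_lift (hfg : Refines f g) {x y : (sameLabelSub Γ g).ConnectedComponent}
    (p : (quotGraph Γ g).Walk x y) {a b : N} (ha : (sameLabelSub Γ g).connectedComponentMk a = x)
    (hb : (sameLabelSub Γ g).connectedComponentMk b = y) :
    ∃ W : (quotGraph Γ f).Walk ((sameLabelSub Γ f).connectedComponentMk a)
      ((sameLabelSub Γ f).connectedComponentMk b),
      ∀ e ∈ W.edges, (e.map (quotProj hfg)).IsDiag ∨ e.map (quotProj hfg) ∈ p.edges := by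
  induction p generalizing a with
  | nil =>
    obtain ⟨W, hW⟩ :=
      exists_walk_collapsed_of_walk hfg (ConnectedComponent.exact (ha.trans hb.symm)).some
    exact ⟨W, fun e he => .inl (hW e he)⟩
  | cons h p ih =>
    obtain ⟨hne, c, d, rfl, rfl, hcd⟩ := h
    obtain ⟨W₁, hW₁⟩ := exists_walk_collapsed_of_walk hfg (ConnectedComponent.exact ha).some
    obtain ⟨W₂, hW₂⟩ := ih rfl hb
    refine ⟨W₁.append (.cons (quotGraph_adj_mk_of_ne hfg hcd hne) W₂), ?_⟩
    simp only [Walk.edges_append, Walk.edges_cons, List.mem_append, List.mem_cons]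
    rintro e (he | rfl | he)
    · exact .inl (hW₁ e he)
    · exact .inr (Sym2.map_mk _ _ _ ▸ List.mem_cons_self)
    · exact (hW₂ e he).imp_right (List.mem_cons_of_mem _)

theorem isAcyclic_quotGraph (hfg : Refines f g) (hf : (quotGraph Γ f).IsAcyclic) :
    (quotGraph Γ g).IsAcyclic := by
  refine isAcyclic_iff_forall_adj_isBridge.mpr ?_
  rintro _ _ ⟨hne, a, b, rfl, rfl, hab⟩
  refine isBridge_iff_forall_walk_mem_edges.mpr fun p => ?_
  have hbridge := isAcyclic_iff_forall_adj_isBridge.mp hf (quotGraph_adj_mk_of_ne hfg hab hne)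
  obtain ⟨W, hW⟩ := exists_walk_lift hfg p rfl rfl
  rcases hW _ (isBridge_iff_forall_walk_mem_edges.mp hbridge W) with hdiag | hmem
  · exact absurd (Sym2.mk_isDiag_iff.mp hdiag) hne
  · exact hmem

end Refinement

theorem csgLabelFun_refines {V : Type*} (G : SimpleGraph V) (k : ℕ) (T : Set V) (v : V) :
    Refines (csgLabelFun G k T) (csgLabelFun G k (T \ {v})) :=
  fun _ _ h => funext fun t => congrFun h ⟨t.1, t.2.1⟩

section Forget

variable {V : Type*} {G : SimpleGraph V} {k : ℕ} {T : Set V} {v : V}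

/-- A colour of `b` on `T ∖ {v}` that `a` misses there could only be `a v = b v`, which `b`
cannot use elsewhere on the clique `T`. -/
theorem range_diff_subset_of_apply_eq (hT : G.IsClique T) {a b : V → Fin k}
    (hb : IsColoring G k b) (hv : a v = b v) :
    Set.range (fun t : ↥(T \ {v}) => b t) \ Set.range (fun t : ↥(T \ {v}) => a t) ⊆
      Set.range (fun t : T => b t) \ Set.range (fun t : T => a t) := by
  rintro _ ⟨⟨t, rfl⟩, hnew⟩
  refine ⟨⟨⟨t, t.2.1⟩, rfl⟩, ?_⟩
  rintro ⟨s, hs⟩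
  by_cases hsv : s.1 = v
  · exact hb t v (hT t.2.1 (hsv ▸ s.2) t.2.2) (hs.symm.trans (hsv ▸ hv))
  · exact hnew ⟨⟨s, s.2, hsv⟩, hs⟩

theorem range_csgLabel_quotProj_diff_subset (hT : G.IsClique T) {X Y : CSGNode G k T}
    (hXY : (CSG G k T).Adj X Y)
    (hne : quotProj (csgLabelFun_refines G k T v) X ≠ quotProj (csgLabelFun_refines G k T v) Y) :
    Set.range (csgLabel G k (T \ {v}) (quotProj (csgLabelFun_refines G k T v) Y)) \
        Set.range (csgLabel G k (T \ {v}) (quotProj (csgLabelFun_refines G k T v) X)) ⊆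
      Set.range (csgLabel G k T Y) \ Set.range (csgLabel G k T X) := by
  obtain ⟨-, a, b, rfl, rfl, hab⟩ := hXY
  have hv : a.1 v = b.1 v := by
    by_contra hav
    obtain ⟨w, -, huniq⟩ := id hab
    refine hne (ConnectedComponent.sound (Adj.reachable ⟨hab, funext fun t => ?_⟩))
    by_contra hat
    exact t.2.2 ((huniq t hat).trans (huniq v hav).symm)
  exact range_diff_subset_of_apply_eq hT b.2 hv

end Forget

theorem statement_17_general {V : Type} (G : SimpleGraph V) (k : ℕ) (T : Set V) (hT : G.IsClique T)
    (v : V)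
    (α β : {f : V → Fin k // IsColoring G k f})
    (hforest : IsAcyclic (CSG G k T))
    (P : (CSG G k T).Walk (csgNode G k T α) (csgNode G k T β)) :
    IsAcyclic (CSG G k (T \ {v})) ∧
      ∃ P' : (CSG G k (T \ {v})).Walk (csgNode G k (T \ {v}) α) (csgNode G k (T \ {v}) β),
        P'.IsPath ∧
        (∀ Q : (CSG G k (T \ {v})).Walk (csgNode G k (T \ {v}) α)
            (csgNode G k (T \ {v}) β), Q.IsPath → Q = P') ∧
        walkWeight (csgLabel G k (T \ {v})) P' ≤ walkWeight (csgLabel G k T) P := by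
  classical
  have hfg := csgLabelFun_refines G k T v
  have hforest' : IsAcyclic (CSG G k (T \ {v})) := isAcyclic_quotGraph hfg hforest
  obtain ⟨Q, hQ⟩ := exists_walk_edges_subset_map (quotProj hfg) (quotGraph_adj_quotProj hfg) P
  let P' : (CSG G k (T \ {v})).Walk (csgNode G k (T \ {v}) α) (csgNode G k (T \ {v}) β) :=
    Q.bypass
  have hP' : P'.IsPath := Q.bypass_isPath
  refine ⟨hforest', P', hP', fun R hR =>
    congrArg Subtype.val ((hforest'.subsingleton_path _ _).elim ⟨R, hR⟩ ⟨P', hP'⟩), ?_⟩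
  exact walkWeight_le_of_edges_subset_map _ _ (quotProj hfg)
    (fun _ _ => range_csgLabel_quotProj_diff_subset hT) P P'
    (List.Subset.trans Q.edges_bypass_subset_edges hQ)

/-- (forget step for essential information) if `C^c_k(G,T)` is a forest
in which the `α`-node and the `β`-node lie in the same component, with unique
`α`-`β`-path `P`, then `C^c_k(G, T∖{v})` is a forest with a unique `α`-`β`-path `P'`,
and `w(P') ≤ w(P)`. -/
theorem statement_17 {V : Type} [Fintype V] [DecidableEq V] (G : SimpleGraph V)
    (k : ℕ) (hk : 3 ≤ k) (hconn : LConnected G (k - 2)) (hchord : Chordal G)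
    (hcol : ∃ α : V → Fin k, IsColoring G k α)
    (T : Set V) (hT : G.IsClique T) (hcard : k - 1 ≤ T.ncard) (v : V) (hv : v ∈ T)
    (α β : {f : V → Fin k // IsColoring G k f})
    (hforest : IsAcyclic (CSG G k T))
    (P : (CSG G k T).Walk (csgNode G k T α) (csgNode G k T β)) (hP : P.IsPath) :
    IsAcyclic (CSG G k (T \ {v})) ∧
      ∃ P' : (CSG G k (T \ {v})).Walk (csgNode G k (T \ {v}) α) (csgNode G k (T \ {v}) β),
        P'.IsPath ∧
        (∀ Q : (CSG G k (T \ {v})).Walk (csgNode G k (T \ {v}) α)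
            (csgNode G k (T \ {v}) β), Q.IsPath → Q = P') ∧
        walkWeight (csgLabel G k (T \ {v})) P' ≤ walkWeight (csgLabel G k T) P :=
  statement_17_general G k T hT v α β hforest P
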